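/- arXiv:1910.09856 — 2 statements merged into one kernel-verified Lean document; each statement's English description precedes it below -/
import Mathlib

section
/- Let V_1, V_2 > 0, let φ_1, φ_2 be independent random variables each uniformly distributed on [0, 2π), let h = V_1 e^{jφ_1} + V_2 e^{jφ_2}, and let γ = γ̄ |h|² / (V_1² + V_2²) with γ̄ > 0 and Δ = 2V_1V_2/(V_1² + V_2²). Then the law of γ is absolutely continuous with respect to Lebesgue measure with density f_γ(x) = 1 / (π γ̄ √(Δ² − (1 − x/γ̄)²)) for γ̄(1−Δ) < x < γ̄(1+Δ), and f_γ(x) = 0 outside this interval. -/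
/-!
Expanding the square, `|h|² = V₁² + V₂² + 2V₁V₂ cos(φ₁ - φ₂)`, so `γ = γ̄ + γ̄Δ cos(φ₁ - φ₂)`.
Reduced modulo `2π`, the difference of a uniform phase and an independent phase is again
uniform (the normalised Haar measure on the circle is translation invariant), so `γ` has the law
of `a + b cos φ` with `φ` uniform, `a = γ̄`, `b = γ̄Δ`. On each of `(0, π)` and `(π, 2π)` this map
is inverted by a branch of `x ↦ arccos ((x - a) / b)`, whose derivative has absolute value
`1 / √(b² - (x - a)²)`, and the change of variables formula gives the density.
-/

open MeasureTheory ProbabilityTheory Real Complex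
open scoped ENNReal

/-- The uniform distribution on `[0, 2π)`. -/
noncomputable def uniformPhase : Measure ℝ :=
  (ENNReal.ofReal (2 * Real.pi))⁻¹ • (volume.restrict (Set.Ico 0 (2 * Real.pi)))

open Set Function

theorem map_restrict_image_eq_withDensity_abs_deriv {s : Set ℝ} (hs : MeasurableSet s)
    {f g g' : ℝ → ℝ} (hf : Measurable f) (hg : ∀ x ∈ s, HasDerivWithinAt g (g' x) s x)
    (hfg : LeftInvOn f g s) :
    (volume.restrict (g '' s)).map f =
      (volume.restrict s).withDensity fun x => ENNReal.ofReal |g' x| := by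
  rw [← map_withDensity_abs_det_fderiv_eq_addHaar volume hs.nullMeasurableSet
    (fun x hx => (hg x hx).hasFDerivWithinAt) hfg.injOn]
  have hg_meas : AEMeasurable g ((volume.restrict s).withDensity fun x => ENNReal.ofReal |g' x|) :=
    (ContinuousOn.aemeasurable (fun x hx => (hg x hx).continuousWithinAt) hs).mono_ac
      (withDensity_absolutelyContinuous _ _)
  simp only [ContinuousLinearMap.det_toSpanSingleton]
  rw [AEMeasurable.map_map_of_aemeasurable hf.aemeasurable hg_meas]
  refine (Measure.map_congr ?_).trans Measure.map_id
  exact (withDensity_absolutelyContinuous _ _).ae_le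
    ((ae_restrict_mem hs).mono fun x hx => hfg hx)

theorem image_arccos_Ioo : arccos '' Ioo (-1) 1 = Ioo 0 π := by
  ext θ
  constructor
  · rintro ⟨u, ⟨hu₁, hu₂⟩, rfl⟩
    exact ⟨arccos_pos.2 hu₂, arccos_lt_pi.2 hu₁⟩
  · rintro ⟨hθ₀, hθπ⟩
    have hθ : arccos (cos θ) = θ := arccos_cos hθ₀.le hθπ.le
    exact ⟨cos θ, ⟨arccos_lt_pi.1 (by rwa [hθ]), arccos_pos.1 (by rwa [hθ])⟩, hθ⟩

section CosineLaw

variable (a : ℝ) {b : ℝ} (hb : 0 < b)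
include hb

theorem image_sub_div_Ioo : (fun x => (x - a) / b) '' Ioo (a - b) (a + b) = Ioo (-1) 1 := by
  ext u
  constructor
  · rintro ⟨x, ⟨hx₁, hx₂⟩, rfl⟩
    constructor
    · rw [lt_div_iff₀ hb]; linarith
    · rw [div_lt_iff₀ hb]; linarith
  · rintro ⟨hu₁, hu₂⟩
    exact ⟨a + b * u, ⟨by nlinarith, by nlinarith⟩, by field_simp; ring⟩

theorem image_arccos_sub_div :
    (fun x => arccos ((x - a) / b)) '' Ioo (a - b) (a + b) = Ioo 0 π := by
  rw [← image_arccos_Ioo, ← image_sub_div_Ioo a hb, image_image]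

theorem leftInvOn_add_mul_cos_arccos_sub_div :
    LeftInvOn (fun θ => a + b * Real.cos θ) (fun x => arccos ((x - a) / b))
      (Ioo (a - b) (a + b)) := by
  intro x hx
  obtain ⟨hu₁, hu₂⟩ : (x - a) / b ∈ Ioo (-1) 1 :=
    image_sub_div_Ioo a hb ▸ mem_image_of_mem _ hx
  simp only [cos_arccos hu₁.le hu₂.le]
  field_simp
  ring

theorem hasDerivAt_arccos_sub_div {x : ℝ} (hx : x ∈ Ioo (a - b) (a + b)) :
    HasDerivAt (fun x => arccos ((x - a) / b)) (-(1 / √(b ^ 2 - (x - a) ^ 2))) x := by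
  obtain ⟨hu₁, hu₂⟩ : (x - a) / b ∈ Ioo (-1) 1 :=
    image_sub_div_Ioo a hb ▸ mem_image_of_mem _ hx
  have hsqrt : √(b ^ 2 - (x - a) ^ 2) = b * √(1 - ((x - a) / b) ^ 2) := by
    rw [← sqrt_sq hb.le, ← sqrt_mul (sq_nonneg b), sqrt_sq hb.le]
    congr 1
    field_simp
  have hu : HasDerivAt (fun x => (x - a) / b) (1 / b) x :=
    ((hasDerivAt_id x).sub_const a).div_const b
  refine ((hasDerivAt_arccos hu₁.ne' hu₂.ne).comp x hu).congr_deriv ?_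
  rw [hsqrt]
  field_simp

theorem map_add_mul_cos_restrict_Ioo_zero_pi :
    (volume.restrict (Ioo 0 π)).map (fun θ => a + b * Real.cos θ) =
      (volume.restrict (Ioo (a - b) (a + b))).withDensity
        fun x => ENNReal.ofReal (1 / √(b ^ 2 - (x - a) ^ 2)) := by
  rw [← image_arccos_sub_div a hb,
    map_restrict_image_eq_withDensity_abs_deriv measurableSet_Ioo (by fun_prop)
      (fun x hx => (hasDerivAt_arccos_sub_div a hb hx).hasDerivWithinAt)
      (leftInvOn_add_mul_cos_arccos_sub_div a hb)]
  congr with x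
  rw [abs_neg, abs_of_nonneg (by positivity)]

theorem map_add_mul_cos_restrict_Ioo_pi_two_pi :
    (volume.restrict (Ioo π (2 * π))).map (fun θ => a + b * Real.cos θ) =
      (volume.restrict (Ioo (a - b) (a + b))).withDensity
        fun x => ENNReal.ofReal (1 / √(b ^ 2 - (x - a) ^ 2)) := by
  have himage : (fun x => 2 * π - arccos ((x - a) / b)) '' Ioo (a - b) (a + b) =
      Ioo π (2 * π) := by
    rw [← image_image (2 * π - ·) (fun x => arccos ((x - a) / b)), image_arccos_sub_div a hb,
      image_const_sub_Ioo]
    congr 1 <;> ring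
  rw [← himage,
    map_restrict_image_eq_withDensity_abs_deriv measurableSet_Ioo (by fun_prop)
      (fun x hx => ((hasDerivAt_arccos_sub_div a hb hx).const_sub (2 * π)).hasDerivWithinAt)
      (fun x hx => by
        simpa only [Real.cos_two_pi_sub] using leftInvOn_add_mul_cos_arccos_sub_div a hb hx)]
  congr with x
  rw [neg_neg, abs_of_nonneg (by positivity)]

theorem map_add_mul_cos_uniformPhase :
    uniformPhase.map (fun θ => a + b * Real.cos θ) =
      volume.withDensity ((Ioo (a - b) (a + b)).indicator
        fun x => ENNReal.ofReal (1 / (π * √(b ^ 2 - (x - a) ^ 2)))) := by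
  have hsplit : volume.restrict (Ico 0 (2 * π)) =
      volume.restrict (Ioo 0 π) + volume.restrict (Ioo π (2 * π)) := by
    rw [← Ico_union_Ico_eq_Ico pi_pos.le (by linarith [pi_pos]),
      Measure.restrict_union Ico_disjoint_Ico_same measurableSet_Ico,
      Measure.restrict_congr_set Ioo_ae_eq_Ico.symm, Measure.restrict_congr_set Ioo_ae_eq_Ico.symm]
  have hconst : (ENNReal.ofReal (2 * π))⁻¹ * 2 = ENNReal.ofReal π⁻¹ := by
    rw [← ENNReal.ofReal_inv_of_pos two_pi_pos, ← ENNReal.ofReal_ofNat 2,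
      ← ENNReal.ofReal_mul (by positivity)]
    congr 1
    field_simp
  rw [uniformPhase, Measure.map_smul, hsplit, Measure.map_add _ _ (by fun_prop),
    map_add_mul_cos_restrict_Ioo_zero_pi a hb, map_add_mul_cos_restrict_Ioo_pi_two_pi a hb,
    withDensity_indicator measurableSet_Ioo, ← two_smul ℝ≥0∞, smul_smul, hconst,
    ← withDensity_smul' _ _ ENNReal.ofReal_ne_top]
  congr with x
  rw [Pi.smul_apply, smul_eq_mul, ← ENNReal.ofReal_mul (by positivity)]
  congr 1
  ring

end CosineLaw

theorem map_sub_prod_eq_of_isAddRightInvariant {G : Type*} [AddGroup G] [MeasurableSpace G] [MeasurableAdd₂ G]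
    [MeasurableNeg G] (μ ν : Measure G) [SFinite μ] [IsProbabilityMeasure ν]
    [μ.IsAddRightInvariant] :
    (μ.prod ν).map (fun z => z.1 - z.2) = μ := by
  calc (μ.prod ν).map (fun z => z.1 - z.2)
      = ((μ.prod ν).map fun z => (z.1 - z.2, z.2)).map Prod.fst :=
        (Measure.map_map measurable_fst
          ((measurable_fst.sub measurable_snd).prodMk measurable_snd)).symm
    _ = μ := by
        rw [(measurePreserving_sub_prod μ ν).map_eq, Measure.map_fst_prod, measure_univ, one_smul]

local instance : Fact (0 < 2 * π) := ⟨two_pi_pos⟩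

theorem map_coe_uniformPhase :
    uniformPhase.map ((↑) : ℝ → AddCircle (2 * π)) = (ENNReal.ofReal (2 * π))⁻¹ • volume := by
  have h := (AddCircle.measurePreserving_mk (2 * π) 0).map_eq
  rw [zero_add] at h
  rw [uniformPhase, Measure.map_smul, Measure.restrict_congr_set Ico_ae_eq_Ioc, h]

section PhaseDifference

variable {Ω : Type*} [MeasurableSpace Ω] {μ : Measure Ω} [IsProbabilityMeasure μ]
  {φ₁ φ₂ : Ω → ℝ}

theorem map_coe_sub_of_indepFun (hφ₁ : Measurable φ₁) (hφ₂ : Measurable φ₂)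
    (hindep : IndepFun φ₁ φ₂ μ) (hunif : μ.map φ₁ = uniformPhase) :
    μ.map (fun ω => ((φ₁ ω - φ₂ ω : ℝ) : AddCircle (2 * π))) =
      (ENNReal.ofReal (2 * π))⁻¹ • volume := by
  have hcoe : Measurable ((↑) : ℝ → AddCircle (2 * π)) := AddCircle.measurable_mk'
  have hpair : μ.map (fun ω => ((φ₁ ω : AddCircle (2 * π)), (φ₂ ω : AddCircle (2 * π)))) =
      ((ENNReal.ofReal (2 * π))⁻¹ • volume).prod (μ.map fun ω => (φ₂ ω : AddCircle (2 * π))) := by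
    have h := (indepFun_iff_map_prod_eq_prod_map_map (hcoe.comp hφ₁).aemeasurable
      (hcoe.comp hφ₂).aemeasurable).1 (hindep.comp hcoe hcoe)
    rwa [← Measure.map_map hcoe hφ₁, hunif, map_coe_uniformPhase] at h
  have : IsProbabilityMeasure (μ.map fun ω => (φ₂ ω : AddCircle (2 * π))) :=
    Measure.isProbabilityMeasure_map (hcoe.comp hφ₂).aemeasurable
  calc μ.map (fun ω => ((φ₁ ω - φ₂ ω : ℝ) : AddCircle (2 * π)))
      = (μ.map fun ω => ((φ₁ ω : AddCircle (2 * π)), (φ₂ ω : AddCircle (2 * π)))).map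
          fun z => z.1 - z.2 := by
        rw [Measure.map_map (by fun_prop) (by fun_prop)]
        rfl
    _ = _ := by rw [hpair, map_sub_prod_eq_of_isAddRightInvariant]

theorem map_periodic_sub_of_indepFun {β : Type*} [MeasurableSpace β] {f : ℝ → β}
    (hf : Measurable f) (hper : Periodic f (2 * π)) (hφ₁ : Measurable φ₁) (hφ₂ : Measurable φ₂)
    (hindep : IndepFun φ₁ φ₂ μ) (hunif : μ.map φ₁ = uniformPhase) :
    μ.map (fun ω => f (φ₁ ω - φ₂ ω)) = uniformPhase.map f := by
  have hF : Measurable hper.lift := measurable_from_quotient.2 hf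
  have hcoe : Measurable ((↑) : ℝ → AddCircle (2 * π)) := AddCircle.measurable_mk'
  calc μ.map (fun ω => f (φ₁ ω - φ₂ ω))
      = (μ.map fun ω => ((φ₁ ω - φ₂ ω : ℝ) : AddCircle (2 * π))).map hper.lift := by
        rw [Measure.map_map hF (by fun_prop)]
        exact congrArg (Measure.map · μ) (funext fun ω => (hper.lift_coe _).symm)
    _ = uniformPhase.map f := by
        rw [map_coe_sub_of_indepFun hφ₁ hφ₂ hindep hunif, ← map_coe_uniformPhase,
          Measure.map_map hF hcoe]
        exact congrArg (Measure.map · uniformPhase) (funext hper.lift_coe)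

end PhaseDifference

theorem norm_mul_exp_add_mul_exp_sq (V₁ V₂ a b : ℝ) :
    ‖(V₁ : ℂ) * exp (a * I) + (V₂ : ℂ) * exp (b * I)‖ ^ 2 =
      V₁ ^ 2 + V₂ ^ 2 + 2 * V₁ * V₂ * Real.cos (a - b) := by
  rw [Complex.sq_norm, Complex.normSq_apply]
  simp only [Complex.exp_mul_I, ← Complex.ofReal_cos, ← Complex.ofReal_sin,
    Complex.add_re, Complex.add_im, Complex.mul_re, Complex.mul_im,
    Complex.ofReal_re, Complex.ofReal_im, Complex.I_re, Complex.I_im]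
  rw [Real.cos_sub]
  nlinarith [Real.sin_sq_add_cos_sq a, Real.sin_sq_add_cos_sq b]

theorem twoWave_snr_pdf_general {Ω : Type*} [MeasurableSpace Ω] (μ : Measure Ω)
    [IsProbabilityMeasure μ] (V₁ V₂ : ℝ) (hV₁ : 0 < V₁) (hV₂ : 0 < V₂)
    (φ₁ φ₂ : Ω → ℝ) (hφ₁ : Measurable φ₁) (hφ₂ : Measurable φ₂)
    (hindep : IndepFun φ₁ φ₂ μ)
    (hunif₁ : Measure.map φ₁ μ = uniformPhase)
    (γbar : ℝ) (hγbar : 0 < γbar)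
    (γ : Ω → ℝ)
    (hγ_def : ∀ ω, γ ω = γbar *
      (‖(V₁ : ℂ) * Complex.exp ((φ₁ ω : ℂ) * Complex.I) +
        (V₂ : ℂ) * Complex.exp ((φ₂ ω : ℂ) * Complex.I)‖) ^ 2 / (V₁ ^ 2 + V₂ ^ 2))
    (Δ : ℝ) (hΔ : Δ = 2 * V₁ * V₂ / (V₁ ^ 2 + V₂ ^ 2)) :
    Measure.map γ μ =
      volume.withDensity (fun x =>
        if γbar * (1 - Δ) < x ∧ x < γbar * (1 + Δ) then
          ENNReal.ofReal (1 / (Real.pi * γbar * Real.sqrt (Δ ^ 2 - (1 - x / γbar) ^ 2)))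
        else 0) := by
  have hΔ_pos : 0 < Δ := hΔ ▸ by positivity
  have hγ : γ = fun ω => γbar + γbar * Δ * Real.cos (φ₁ ω - φ₂ ω) := by
    funext ω
    rw [hγ_def, norm_mul_exp_add_mul_exp_sq, hΔ]
    field_simp
  have hsqrt (x : ℝ) :
      π * γbar * √(Δ ^ 2 - (1 - x / γbar) ^ 2) = π * √((γbar * Δ) ^ 2 - (x - γbar) ^ 2) := by
    rw [mul_assoc, ← sqrt_sq hγbar.le, ← sqrt_mul (sq_nonneg _), sqrt_sq hγbar.le]
    congr 2
    field_simp
    ring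
  have hdensity : (fun x => if γbar * (1 - Δ) < x ∧ x < γbar * (1 + Δ) then
      ENNReal.ofReal (1 / (π * γbar * √(Δ ^ 2 - (1 - x / γbar) ^ 2))) else 0) =
      (Ioo (γbar - γbar * Δ) (γbar + γbar * Δ)).indicator
        fun x => ENNReal.ofReal (1 / (π * √((γbar * Δ) ^ 2 - (x - γbar) ^ 2))) := by
    funext x
    simp only [indicator_apply, mem_Ioo, mul_one_sub, mul_one_add, hsqrt]
  rw [hγ, map_periodic_sub_of_indepFun (f := fun θ => γbar + γbar * Δ * Real.cos θ) (by fun_prop)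
      (fun θ => by simp only [Real.cos_add_two_pi]) hφ₁ hφ₂ hindep hunif₁,
    map_add_mul_cos_uniformPhase γbar (mul_pos hγbar hΔ_pos), hdensity]

/-- The two-wave SNR `γ = γ̄ |V₁ e^{jφ₁} + V₂ e^{jφ₂}|²/(V₁²+V₂²)`
with independent uniform phases and `Δ = 2V₁V₂/(V₁²+V₂²)` has a law that is absolutely
continuous with respect to Lebesgue measure, with density
`x ↦ 1/(π γ̄ √(Δ² − (1 − x/γ̄)²))` on `(γ̄(1−Δ), γ̄(1+Δ))` and `0` elsewhere. -/
theorem twoWave_snr_pdf {Ω : Type*} [MeasurableSpace Ω] (μ : Measure Ω)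
    [IsProbabilityMeasure μ] (V₁ V₂ : ℝ) (hV₁ : 0 < V₁) (hV₂ : 0 < V₂)
    (φ₁ φ₂ : Ω → ℝ) (hφ₁ : Measurable φ₁) (hφ₂ : Measurable φ₂)
    (hindep : IndepFun φ₁ φ₂ μ)
    (hunif₁ : Measure.map φ₁ μ = uniformPhase)
    (hunif₂ : Measure.map φ₂ μ = uniformPhase)
    (γbar : ℝ) (hγbar : 0 < γbar)
    (γ : Ω → ℝ)
    (hγ_def : ∀ ω, γ ω = γbar *
      (‖(V₁ : ℂ) * Complex.exp ((φ₁ ω : ℂ) * Complex.I) +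
        (V₂ : ℂ) * Complex.exp ((φ₂ ω : ℂ) * Complex.I)‖) ^ 2 / (V₁ ^ 2 + V₂ ^ 2))
    (Δ : ℝ) (hΔ : Δ = 2 * V₁ * V₂ / (V₁ ^ 2 + V₂ ^ 2)) :
    Measure.map γ μ =
      volume.withDensity (fun x =>
        if γbar * (1 - Δ) < x ∧ x < γbar * (1 + Δ) then
          ENNReal.ofReal (1 / (Real.pi * γbar * Real.sqrt (Δ ^ 2 - (1 - x / γbar) ^ 2)))
        else 0) :=
  twoWave_snr_pdf_general μ V₁ V₂ hV₁ hV₂ φ₁ φ₂ hφ₁ hφ₂ hindep hunif₁ γbar hγbar γ hγ_def Δ hΔ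
end

section
/- Let γ̄_b, γ̄_e > 0, Δ_b ∈ [0, 1), Δ_e ∈ [0, 1], and R_s > 0. Then γ̄_b (1 − Δ_b) > 2^{R_s} γ̄_e (1 + Δ_e) + 2^{R_s} − 1 if and only if R_s < log₂((γ̄_b(1 − Δ_b) + 1)/(γ̄_e(1 + Δ_e) + 1)). Consequently, for two-wave Bob and Eve channels with independent uniform phases, every constant rate R_s with 0 < R_s < R_s^max = [log₂((γ̄_b(1 − Δ_b) + 1)/(γ̄_e(1 + Δ_e) + 1))]⁺ yields zero outage probability of secrecy capacity: P([log₂(1+γ_b) − log₂(1+γ_e)]⁺ < R_s) = 0. -/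
/-!
Whatever the phases, the triangle inequality confines the two-wave gain to
`|V₁ - V₂| ≤ |h| ≤ V₁ + V₂`, i.e. `(1 - Δ) E|h|² ≤ |h|² ≤ (1 + Δ) E|h|²`. Hence Bob's SNR never
drops below `γ̄_b (1 - Δ_b)` and Eve's never exceeds `γ̄_e (1 + Δ_e)`, so the secrecy capacity is
surely at least `log₂((γ̄_b(1 - Δ_b) + 1)/(γ̄_e(1 + Δ_e) + 1))`: below that rate the outage event
is empty. The equivalence is the monotonicity of `log₂` after clearing the denominator.
-/

open MeasureTheory ProbabilityTheory Real Complex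

noncomputable section

def twoWaveGain (V₁ V₂ θ₁ θ₂ : ℝ) : ℂ :=
  (V₁ : ℂ) * Complex.exp ((θ₁ : ℂ) * I) + (V₂ : ℂ) * Complex.exp ((θ₂ : ℂ) * I)

def twoWaveDelta (V₁ V₂ : ℝ) : ℝ := 2 * V₁ * V₂ / (V₁ ^ 2 + V₂ ^ 2)

def secrecyCapacity (γb γe : ℝ) : ℝ := max 0 (logb 2 (1 + γb) - logb 2 (1 + γe))

end

theorem lt_logb_div_iff_rpow_mul_lt {b a c x : ℝ} (hb : 1 < b) (ha : 0 < a) (hc : 0 < c) :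
    x < logb b (a / c) ↔ b ^ x * c < a := by
  rw [lt_logb_iff_rpow_lt hb (div_pos ha hc), lt_div_iff₀ hc]

theorem sq_norm_sub_norm_le_sq_norm_add {E : Type*} [SeminormedAddCommGroup E] (a b : E) :
    (‖a‖ - ‖b‖) ^ 2 ≤ ‖a + b‖ ^ 2 := by
  have h := abs_norm_sub_norm_le a (-b)
  rw [norm_neg, sub_neg_eq_add] at h
  simpa only [sq_abs] using pow_le_pow_left₀ (abs_nonneg _) h 2

theorem sq_norm_add_le_sq_add_norm {E : Type*} [SeminormedAddCommGroup E] (a b : E) :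
    ‖a + b‖ ^ 2 ≤ (‖a‖ + ‖b‖) ^ 2 :=
  pow_le_pow_left₀ (norm_nonneg _) (norm_add_le a b) 2

theorem norm_ofReal_mul_exp_ofReal_mul_I (V θ : ℝ) :
    ‖(V : ℂ) * Complex.exp ((θ : ℂ) * I)‖ = |V| := by
  rw [norm_mul, norm_exp_ofReal_mul_I, norm_real, Real.norm_eq_abs, mul_one]

section TwoWave

variable {V₁ V₂ : ℝ}

theorem sq_sub_le_norm_twoWaveGain_sq (h₁ : 0 < V₁) (h₂ : 0 < V₂) (θ₁ θ₂ : ℝ) :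
    (V₁ - V₂) ^ 2 ≤ ‖twoWaveGain V₁ V₂ θ₁ θ₂‖ ^ 2 := by
  have h := sq_norm_sub_norm_le_sq_norm_add ((V₁ : ℂ) * Complex.exp ((θ₁ : ℂ) * I))
    ((V₂ : ℂ) * Complex.exp ((θ₂ : ℂ) * I))
  rwa [norm_ofReal_mul_exp_ofReal_mul_I, norm_ofReal_mul_exp_ofReal_mul_I, abs_of_pos h₁,
    abs_of_pos h₂] at h

theorem norm_twoWaveGain_sq_le_sq_add (h₁ : 0 < V₁) (h₂ : 0 < V₂) (θ₁ θ₂ : ℝ) :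
    ‖twoWaveGain V₁ V₂ θ₁ θ₂‖ ^ 2 ≤ (V₁ + V₂) ^ 2 := by
  have h := sq_norm_add_le_sq_add_norm ((V₁ : ℂ) * Complex.exp ((θ₁ : ℂ) * I))
    ((V₂ : ℂ) * Complex.exp ((θ₂ : ℂ) * I))
  rwa [norm_ofReal_mul_exp_ofReal_mul_I, norm_ofReal_mul_exp_ofReal_mul_I, abs_of_pos h₁,
    abs_of_pos h₂] at h

theorem twoWaveDelta_le_one : twoWaveDelta V₁ V₂ ≤ 1 :=
  div_le_one_of_le₀ (two_mul_le_add_sq V₁ V₂) (by positivity)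

theorem one_sub_twoWaveDelta (h : V₁ ^ 2 + V₂ ^ 2 ≠ 0) :
    1 - twoWaveDelta V₁ V₂ = (V₁ - V₂) ^ 2 / (V₁ ^ 2 + V₂ ^ 2) := by
  rw [twoWaveDelta]
  field_simp
  ring

theorem one_add_twoWaveDelta (h : V₁ ^ 2 + V₂ ^ 2 ≠ 0) :
    1 + twoWaveDelta V₁ V₂ = (V₁ + V₂) ^ 2 / (V₁ ^ 2 + V₂ ^ 2) := by
  rw [twoWaveDelta]
  field_simp
  ring

variable {γ : ℝ} (hγ : 0 ≤ γ) (h₁ : 0 < V₁) (h₂ : 0 < V₂) (θ₁ θ₂ : ℝ)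
include hγ h₁ h₂

theorem mul_one_sub_twoWaveDelta_le :
    γ * (1 - twoWaveDelta V₁ V₂) ≤ γ * ‖twoWaveGain V₁ V₂ θ₁ θ₂‖ ^ 2 / (V₁ ^ 2 + V₂ ^ 2) := by
  rw [one_sub_twoWaveDelta (by positivity), ← mul_div_assoc]
  gcongr γ * ?_ / _
  exact sq_sub_le_norm_twoWaveGain_sq h₁ h₂ θ₁ θ₂

theorem le_mul_one_add_twoWaveDelta :
    γ * ‖twoWaveGain V₁ V₂ θ₁ θ₂‖ ^ 2 / (V₁ ^ 2 + V₂ ^ 2) ≤ γ * (1 + twoWaveDelta V₁ V₂) := by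
  rw [one_add_twoWaveDelta (by positivity), ← mul_div_assoc]
  gcongr γ * ?_ / _
  exact norm_twoWaveGain_sq_le_sq_add h₁ h₂ θ₁ θ₂

end TwoWave

theorem logb_div_le_secrecyCapacity {gb ge γb γe : ℝ} (hgb : 0 ≤ gb) (hγe : 0 ≤ γe)
    (hb : gb ≤ γb) (he : γe ≤ ge) :
    max 0 (logb 2 ((gb + 1) / (ge + 1))) ≤ secrecyCapacity γb γe := by
  refine max_le_max le_rfl ?_
  rw [logb_div (by positivity) (by linarith)]
  exact sub_le_sub (logb_le_logb_of_le one_lt_two (by positivity) (by linarith))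
    (logb_le_logb_of_le one_lt_two (by positivity) (by linarith))

theorem twoWave_max_secrecy_rate_general {Ω : Type*} [MeasurableSpace Ω] (μ : Measure Ω)
    (Vb₁ Vb₂ Ve₁ Ve₂ : ℝ) (hVb₁ : 0 < Vb₁) (hVb₂ : 0 < Vb₂)
    (hVe₁ : 0 < Ve₁) (hVe₂ : 0 < Ve₂)
    (φ : Fin 4 → Ω → ℝ)
    (γbar_b γbar_e : ℝ) (hγbar_b : 0 < γbar_b) (hγbar_e : 0 < γbar_e)
    (γb γe : Ω → ℝ)
    (hγb_def : ∀ ω, γb ω = γbar_b *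
      ‖(Vb₁ : ℂ) * Complex.exp ((φ 0 ω : ℂ) * Complex.I) +
        (Vb₂ : ℂ) * Complex.exp ((φ 1 ω : ℂ) * Complex.I)‖ ^ 2 / (Vb₁ ^ 2 + Vb₂ ^ 2))
    (hγe_def : ∀ ω, γe ω = γbar_e *
      ‖(Ve₁ : ℂ) * Complex.exp ((φ 2 ω : ℂ) * Complex.I) +
        (Ve₂ : ℂ) * Complex.exp ((φ 3 ω : ℂ) * Complex.I)‖ ^ 2 / (Ve₁ ^ 2 + Ve₂ ^ 2))
    (Δb Δe : ℝ)
    (hΔb : Δb = 2 * Vb₁ * Vb₂ / (Vb₁ ^ 2 + Vb₂ ^ 2))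
    (hΔe : Δe = 2 * Ve₁ * Ve₂ / (Ve₁ ^ 2 + Ve₂ ^ 2)) :
    (∀ gb ge Db De Rs : ℝ, 0 < gb → 0 < ge → 0 ≤ Db → Db < 1 → 0 ≤ De → De ≤ 1 →
      0 < Rs →
      (gb * (1 - Db) > 2 ^ Rs * ge * (1 + De) + 2 ^ Rs - 1 ↔
        Rs < Real.logb 2 ((gb * (1 - Db) + 1) / (ge * (1 + De) + 1)))) ∧
    (∀ Rs : ℝ, 0 < Rs →
      Rs < max 0 (Real.logb 2
        ((γbar_b * (1 - Δb) + 1) / (γbar_e * (1 + Δe) + 1))) →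
      μ {ω | max 0 (Real.logb 2 (1 + γb ω) - Real.logb 2 (1 + γe ω)) < Rs} = 0) := by
  refine ⟨fun gb ge Db De Rs hgb hge _ hDb _ hDe _ => ?_, fun Rs _ hRs => ?_⟩
  · have hnum : 0 < gb * (1 - Db) + 1 := by nlinarith
    have hden : 0 < ge * (1 + De) + 1 := by positivity
    rw [gt_iff_lt, lt_logb_div_iff_rpow_mul_lt one_lt_two hnum hden]
    constructor <;> intro h <;> linarith
  · subst hΔb hΔe
    have hrate : ∀ ω, Rs ≤ secrecyCapacity (γb ω) (γe ω) := fun ω =>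
      hRs.le.trans <| logb_div_le_secrecyCapacity
        (mul_nonneg hγbar_b.le (sub_nonneg.2 twoWaveDelta_le_one))
        (by rw [hγe_def ω]; positivity)
        (hγb_def ω ▸ mul_one_sub_twoWaveDelta_le hγbar_b.le hVb₁ hVb₂ (φ 0 ω) (φ 1 ω))
        (hγe_def ω ▸ le_mul_one_add_twoWaveDelta hγbar_e.le hVe₁ hVe₂ (φ 2 ω) (φ 3 ω))
    exact measure_mono_null (fun ω hω => absurd hω (hrate ω).not_gt) measure_empty

/-- For `γ̄_b, γ̄_e > 0`, `Δ_b ∈ [0,1)`, `Δ_e ∈ [0,1]`, `R_s > 0`: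
`γ̄_b(1−Δ_b) > 2^{R_s} γ̄_e (1+Δ_e) + 2^{R_s} − 1` iff
`R_s < log₂((γ̄_b(1−Δ_b)+1)/(γ̄_e(1+Δ_e)+1))`.  Consequently, for two-wave Bob and Eve
channels with independent uniform phases, every rate `0 < R_s < R_s^max` (where
`R_s^max = [log₂((γ̄_b(1−Δ_b)+1)/(γ̄_e(1+Δ_e)+1))]⁺`) gives zero outage probability of
secrecy capacity. -/
theorem twoWave_max_secrecy_rate {Ω : Type*} [MeasurableSpace Ω] (μ : Measure Ω)
    [IsProbabilityMeasure μ]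
    (Vb₁ Vb₂ Ve₁ Ve₂ : ℝ) (hVb₁ : 0 < Vb₁) (hVb₂ : 0 < Vb₂)
    (hVe₁ : 0 < Ve₁) (hVe₂ : 0 < Ve₂)
    (φ : Fin 4 → Ω → ℝ) (hφ : ∀ i, Measurable (φ i))
    (hindep : iIndepFun φ μ)
    (hunif : ∀ i, Measure.map (φ i) μ = uniformPhase)
    (γbar_b γbar_e : ℝ) (hγbar_b : 0 < γbar_b) (hγbar_e : 0 < γbar_e)
    (γb γe : Ω → ℝ)
    (hγb_def : ∀ ω, γb ω = γbar_b *
      ‖(Vb₁ : ℂ) * Complex.exp ((φ 0 ω : ℂ) * Complex.I) +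
        (Vb₂ : ℂ) * Complex.exp ((φ 1 ω : ℂ) * Complex.I)‖ ^ 2 / (Vb₁ ^ 2 + Vb₂ ^ 2))
    (hγe_def : ∀ ω, γe ω = γbar_e *
      ‖(Ve₁ : ℂ) * Complex.exp ((φ 2 ω : ℂ) * Complex.I) +
        (Ve₂ : ℂ) * Complex.exp ((φ 3 ω : ℂ) * Complex.I)‖ ^ 2 / (Ve₁ ^ 2 + Ve₂ ^ 2))
    (Δb Δe : ℝ)
    (hΔb : Δb = 2 * Vb₁ * Vb₂ / (Vb₁ ^ 2 + Vb₂ ^ 2))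
    (hΔe : Δe = 2 * Ve₁ * Ve₂ / (Ve₁ ^ 2 + Ve₂ ^ 2)) :
    (∀ gb ge Db De Rs : ℝ, 0 < gb → 0 < ge → 0 ≤ Db → Db < 1 → 0 ≤ De → De ≤ 1 →
      0 < Rs →
      (gb * (1 - Db) > 2 ^ Rs * ge * (1 + De) + 2 ^ Rs - 1 ↔
        Rs < Real.logb 2 ((gb * (1 - Db) + 1) / (ge * (1 + De) + 1)))) ∧
    (∀ Rs : ℝ, 0 < Rs →
      Rs < max 0 (Real.logb 2
        ((γbar_b * (1 - Δb) + 1) / (γbar_e * (1 + Δe) + 1))) →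
      μ {ω | max 0 (Real.logb 2 (1 + γb ω) - Real.logb 2 (1 + γe ω)) < Rs} = 0) :=
  twoWave_max_secrecy_rate_general μ Vb₁ Vb₂ Ve₁ Ve₂ hVb₁ hVb₂ hVe₁ hVe₂ φ γbar_b γbar_e hγbar_b
    hγbar_e γb γe hγb_def hγe_def Δb Δe hΔb hΔe
end
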